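/- arXiv:1312.2931 — 2 statements merged into one kernel-verified Lean document; each statement's English description precedes it below -/
import Mathlib

section
/- Let u, f be bounded uniformly continuous real-valued functions on ℝ, let 0 < α < β, and suppose u(t) ≤ f(t) + α ∫₀^∞ e^{-βτ} u(t-τ) dτ for all t ∈ ℝ. Then u(t) ≤ f(t) + α ∫₀^∞ e^{-(β-α)τ} f(t-τ) dτ for all t ∈ ℝ. -/
open MeasureTheory Real Set

/-!
Write `K_c φ (t) = ∫₀^∞ e^{-cτ} φ(t - τ) dτ` and `g = f + α K_{β-α} f`. By Fubini, the kernels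
satisfy the resolvent identity `(a - b) K_a K_b = K_b - K_a` for `0 < b < a`, which says exactly
that `g` solves the inequality with equality: `g = f + α K_β g`. Hence `d = u - g` satisfies
`d ≤ α K_β d`. Since `K_β` maps a function bounded above by `M` to one bounded above by `M / β`,
the supremum `M` of `d` satisfies `M ≤ (α / β) M`, and `α < β` forces `M ≤ 0`, i.e. `u ≤ g`.
-/

noncomputable def expConv (c : ℝ) (φ : ℝ → ℝ) (t : ℝ) : ℝ :=
  ∫ τ in Ioi (0 : ℝ), exp (-c * τ) * φ (t - τ)

lemma integral_exp_neg_mul_Ioi_zero {c : ℝ} (hc : 0 < c) :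
    ∫ τ in Ioi (0 : ℝ), exp (-c * τ) = 1 / c := by
  rw [integral_exp_mul_Ioi (neg_neg_iff_pos.mpr hc), mul_zero, exp_zero, neg_div_neg_eq]

lemma mul_integral_exp_neg_mul_Ioo (c : ℝ) {r : ℝ} (hr : 0 ≤ r) :
    c * ∫ τ in Ioo 0 r, exp (-c * τ) = 1 - exp (-c * r) := by
  rw [← integral_Ioc_eq_integral_Ioo, ← intervalIntegral.integral_of_le hr]
  rcases eq_or_ne c 0 with rfl | hc
  · simp
  · rw [intervalIntegral.integral_comp_mul_left (fun x => exp x) (neg_ne_zero.mpr hc),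
      integral_exp, mul_zero, exp_zero, smul_eq_mul]
    field_simp
    ring

lemma abs_exp_neg_mul_mul_le {φ : ℝ → ℝ} {C : ℝ} (hφC : ∀ s, |φ s| ≤ C) (c τ s : ℝ) :
    |exp (-c * τ) * φ s| ≤ C * exp (-c * τ) := by
  rw [abs_mul, abs_of_pos (exp_pos _), mul_comm]
  exact mul_le_mul_of_nonneg_right (hφC s) (exp_pos _).le

lemma integral_Ioi_mul_integral_Ioi_swap {g F : ℝ → ℝ} (hg : IntegrableOn g (Ioi 0))
    (hF : IntegrableOn F (Ioi 0)) :
    ∫ τ in Ioi 0, g τ * ∫ r in Ioi τ, F r = ∫ r in Ioi 0, (∫ τ in Ioo 0 r, g τ) * F r := by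
  set H : ℝ → ℝ → ℝ := fun τ r => (Ioi τ).indicator (fun r => g τ * F r) r with hH_def
  have hH_eq : Function.uncurry H = {p : ℝ × ℝ | p.1 < p.2}.indicator (fun p => g p.1 * F p.2) := by
    ext ⟨τ, r⟩
    simp [hH_def, indicator_apply]
  have hH : Integrable (Function.uncurry H)
      ((volume.restrict (Ioi 0)).prod (volume.restrict (Ioi 0))) := by
    rw [hH_eq]
    refine (hg.norm.mul_prod hF.norm).mono' ?_ (ae_of_all _ fun p => ?_)
    · exact (hg.aestronglyMeasurable.comp_fst.mul hF.aestronglyMeasurable.comp_snd).indicator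
        (measurableSet_lt measurable_fst measurable_snd)
    · exact (norm_indicator_le_norm_self _ _).trans (norm_mul _ _).le
  have h_inner_left : ∀ τ ∈ Ioi (0 : ℝ), g τ * ∫ r in Ioi τ, F r = ∫ r in Ioi 0, H τ r := by
    intro τ hτ
    rw [hH_def, setIntegral_indicator measurableSet_Ioi,
      inter_eq_right.mpr (Ioi_subset_Ioi (le_of_lt hτ)), integral_const_mul]
  have h_inner_right : ∀ r ∈ Ioi (0 : ℝ), ∫ τ in Ioi 0, H τ r = (∫ τ in Ioo 0 r, g τ) * F r := by
    intro r _
    have hH_slice : (fun τ => H τ r) = (Iio r).indicator (fun τ => g τ * F r) := by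
      ext τ
      simp [hH_def, indicator_apply]
    rw [hH_slice, setIntegral_indicator measurableSet_Iio, Ioi_inter_Iio, integral_mul_const]
  calc ∫ τ in Ioi 0, g τ * ∫ r in Ioi τ, F r = ∫ τ in Ioi 0, ∫ r in Ioi 0, H τ r :=
        setIntegral_congr_fun measurableSet_Ioi h_inner_left
    _ = ∫ r in Ioi 0, ∫ τ in Ioi 0, H τ r := integral_integral_swap hH
    _ = ∫ r in Ioi 0, (∫ τ in Ioo 0 r, g τ) * F r :=
        setIntegral_congr_fun measurableSet_Ioi h_inner_right

section expConv

variable {φ ψ : ℝ → ℝ} {c C D : ℝ}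

lemma integrableOn_exp_neg_mul_mul (hc : 0 < c) (hφ : Measurable φ) (hφC : ∀ s, |φ s| ≤ C)
    (t : ℝ) : IntegrableOn (fun τ => exp (-c * τ) * φ (t - τ)) (Ioi 0) :=
  ((exp_neg_integrableOn_Ioi 0 hc).const_mul C).mono'
    (by fun_prop : Measurable _).aestronglyMeasurable
    (ae_of_all _ fun τ => abs_exp_neg_mul_mul_le hφC c τ _)

lemma abs_expConv_le_div (hc : 0 < c) (hφC : ∀ s, |φ s| ≤ C) (t : ℝ) : |expConv c φ t| ≤ C / c :=
  calc |expConv c φ t| ≤ ∫ τ in Ioi (0 : ℝ), C * exp (-c * τ) :=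
        (Real.norm_eq_abs _).symm.trans_le <|
          norm_integral_le_of_norm_le ((exp_neg_integrableOn_Ioi 0 hc).const_mul C)
          (ae_of_all _ fun τ => abs_exp_neg_mul_mul_le hφC c τ _)
    _ = C / c := by rw [integral_const_mul, integral_exp_neg_mul_Ioi_zero hc, mul_one_div]

lemma abs_const_mul_expConv_le (hc : 0 < c) (hφC : ∀ s, |φ s| ≤ C) (a t : ℝ) :
    |a * expConv c φ t| ≤ |a| * (C / c) := by
  rw [abs_mul]
  exact mul_le_mul_of_nonneg_left (abs_expConv_le_div hc hφC t) (abs_nonneg a)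

lemma expConv_le_div (hc : 0 < c) (hφ : Measurable φ) (hφC : ∀ s, |φ s| ≤ C) {M : ℝ}
    (hM : ∀ s, φ s ≤ M) (t : ℝ) : expConv c φ t ≤ M / c :=
  calc expConv c φ t ≤ ∫ τ in Ioi (0 : ℝ), exp (-c * τ) * M :=
        integral_mono (integrableOn_exp_neg_mul_mul hc hφ hφC t)
          ((exp_neg_integrableOn_Ioi 0 hc).mul_const M)
          fun τ => mul_le_mul_of_nonneg_left (hM _) (exp_pos _).le
    _ = M / c := by rw [integral_mul_const, integral_exp_neg_mul_Ioi_zero hc, one_div_mul_eq_div]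

lemma continuous_expConv (hc : 0 < c) (hφ : Continuous φ) (hφC : ∀ s, |φ s| ≤ C) :
    Continuous (expConv c φ) :=
  continuous_of_dominated (fun _ => (by fun_prop : Continuous _).aestronglyMeasurable)
    (fun _ => ae_of_all _ fun τ => abs_exp_neg_mul_mul_le hφC c τ _)
    ((exp_neg_integrableOn_Ioi 0 hc).const_mul C) (ae_of_all _ fun _ => by fun_prop)

lemma expConv_const_mul (a t : ℝ) : expConv c (fun s => a * φ s) t = a * expConv c φ t := by
  rw [expConv, expConv, ← integral_const_mul]
  congr 1
  ext τ
  ring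

lemma expConv_add (hc : 0 < c) (hφ : Measurable φ) (hφC : ∀ s, |φ s| ≤ C) (hψ : Measurable ψ)
    (hψD : ∀ s, |ψ s| ≤ D) (t : ℝ) :
    expConv c (fun s => φ s + ψ s) t = expConv c φ t + expConv c ψ t := by
  rw [expConv, expConv, expConv, ← integral_add (integrableOn_exp_neg_mul_mul hc hφ hφC t)
    (integrableOn_exp_neg_mul_mul hc hψ hψD t)]
  congr 1
  ext τ
  ring

lemma expConv_sub (hc : 0 < c) (hφ : Measurable φ) (hφC : ∀ s, |φ s| ≤ C) (hψ : Measurable ψ)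
    (hψD : ∀ s, |ψ s| ≤ D) (t : ℝ) :
    expConv c (fun s => φ s - ψ s) t = expConv c φ t - expConv c ψ t := by
  rw [expConv, expConv, expConv, ← integral_sub (integrableOn_exp_neg_mul_mul hc hφ hφC t)
    (integrableOn_exp_neg_mul_mul hc hψ hψD t)]
  congr 1
  ext τ
  ring

lemma expConv_apply_sub (c : ℝ) (φ : ℝ → ℝ) (t τ : ℝ) :
    expConv c φ (t - τ) = exp (c * τ) * ∫ r in Ioi τ, exp (-c * r) * φ (t - r) := by
  rw [← integral_const_mul, ← (measurePreserving_add_right volume τ).setIntegral_preimage_emb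
    (measurableEmbedding_addRight τ), preimage_add_const_Ioi, sub_self, expConv]
  congr 1
  ext σ
  rw [← mul_assoc, ← exp_add]
  congr 2 <;> ring

lemma sub_mul_expConv_expConv {a b : ℝ} (hb : 0 < b) (hba : b < a) (hφ : Measurable φ)
    (hφC : ∀ s, |φ s| ≤ C) (t : ℝ) :
    (a - b) * expConv a (expConv b φ) t = expConv b φ t - expConv a φ t := by
  have hF := integrableOn_exp_neg_mul_mul hb hφ hφC t
  calc (a - b) * expConv a (expConv b φ) t
      = (a - b) * ∫ τ in Ioi 0, exp (-(a - b) * τ) * ∫ r in Ioi τ, exp (-b * r) * φ (t - r) := by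
        rw [expConv]
        congr 2
        ext τ
        rw [expConv_apply_sub, ← mul_assoc, ← exp_add, show -a * τ + b * τ = -(a - b) * τ by ring]
    _ = (a - b) * ∫ r in Ioi 0,
          (∫ τ in Ioo 0 r, exp (-(a - b) * τ)) * (exp (-b * r) * φ (t - r)) := by
        rw [integral_Ioi_mul_integral_Ioi_swap (exp_neg_integrableOn_Ioi 0 (sub_pos.2 hba)) hF]
    _ = ∫ r in Ioi 0, (1 - exp (-(a - b) * r)) * (exp (-b * r) * φ (t - r)) := by
        rw [← integral_const_mul]
        refine setIntegral_congr_fun measurableSet_Ioi fun r hr => ?_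
        rw [← mul_assoc, mul_integral_exp_neg_mul_Ioo _ (le_of_lt hr)]
    _ = ∫ r in Ioi 0, (exp (-b * r) * φ (t - r) - exp (-a * r) * φ (t - r)) := by
        congr 1
        ext r
        rw [sub_mul, one_mul, ← mul_assoc, ← exp_add]
        ring_nf
    _ = expConv b φ t - expConv a φ t :=
        integral_sub hF (integrableOn_exp_neg_mul_mul (hb.trans hba) hφ hφC t)

lemma expConv_add_mul_expConv {α β : ℝ} (hα : 0 < α) (hαβ : α < β) (hφ : Continuous φ)
    (hφC : ∀ s, |φ s| ≤ C) (t : ℝ) :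
    expConv β (fun s => φ s + α * expConv (β - α) φ s) t = expConv (β - α) φ t := by
  have hβ : 0 < β := hα.trans hαβ
  have hd : 0 < β - α := sub_pos.2 hαβ
  have h_resolvent := sub_mul_expConv_expConv hd (sub_lt_self β hα) hφ.measurable hφC t
  rw [sub_sub_cancel] at h_resolvent
  rw [expConv_add hβ hφ.measurable hφC ((continuous_expConv hd hφ hφC).measurable.const_mul α)
    (abs_const_mul_expConv_le hd hφC α), expConv_const_mul, h_resolvent]
  ring

lemma nonpos_of_le_mul_expConv {α β : ℝ} (hα : 0 ≤ α) (hαβ : α < β) (hφ : Measurable φ)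
    (hφC : ∀ s, |φ s| ≤ C) (h : ∀ t, φ t ≤ α * expConv β φ t) (t : ℝ) : φ t ≤ 0 := by
  have hβ : 0 < β := hα.trans_lt hαβ
  have hbdd : BddAbove (range φ) :=
    ⟨C, by rintro _ ⟨s, rfl⟩; exact (le_abs_self _).trans (hφC s)⟩
  set M := ⨆ s, φ s
  have hφM : ∀ s, φ s ≤ M := le_ciSup hbdd
  have hM : M ≤ α / β * M := ciSup_le fun s =>
    calc φ s ≤ α * expConv β φ s := h s
      _ ≤ α * (M / β) := mul_le_mul_of_nonneg_left (expConv_le_div hβ hφ hφC hφM s) hα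
      _ = α / β * M := by ring
  have hM_nonpos : M ≤ 0 := by
    have : α / β < 1 := (div_lt_one hβ).2 hαβ
    nlinarith
  exact (hφM t).trans hM_nonpos

end expConv

theorem stmt_1 (u f : ℝ → ℝ) (α β : ℝ) (hα : 0 < α) (hαβ : α < β)
    (hu_bd : ∃ C, ∀ t, |u t| ≤ C) (hf_bd : ∃ C, ∀ t, |f t| ≤ C)
    (hu_uc : UniformContinuous u) (hf_uc : UniformContinuous f)
    (h : ∀ t : ℝ, u t ≤ f t + α * ∫ τ in Set.Ioi (0:ℝ), Real.exp (-β * τ) * u (t - τ)) :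
    ∀ t : ℝ, u t ≤ f t + α * ∫ τ in Set.Ioi (0:ℝ), Real.exp (-(β - α) * τ) * f (t - τ) := by
  obtain ⟨Cu, huC⟩ := hu_bd
  obtain ⟨Cf, hfC⟩ := hf_bd
  have hβ : 0 < β := hα.trans hαβ
  have hd : 0 < β - α := sub_pos.2 hαβ
  set g : ℝ → ℝ := fun s => f s + α * expConv (β - α) f s
  have hg : Continuous g :=
    hf_uc.continuous.add (continuous_const.mul (continuous_expConv hd hf_uc.continuous hfC))
  have hgC : ∀ s, |g s| ≤ Cf + |α| * (Cf / (β - α)) := fun s =>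
    (abs_add_le _ _).trans (add_le_add (hfC s) (abs_const_mul_expConv_le hd hfC α s))
  have hg_fix : ∀ t, g t = f t + α * expConv β g t := fun t => by
    rw [expConv_add_mul_expConv hα hαβ hf_uc.continuous hfC t]
  have h_diff : ∀ t, u t - g t ≤ α * expConv β (fun s => u s - g s) t := fun t => by
    have hu : u t ≤ f t + α * expConv β u t := h t
    rw [expConv_sub hβ hu_uc.continuous.measurable huC hg.measurable hgC, hg_fix t]
    linarith
  intro t
  have hug : u t - g t ≤ 0 :=
    nonpos_of_le_mul_expConv hα.le hαβ (hu_uc.continuous.measurable.sub hg.measurable)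
      (fun s => (abs_sub _ _).trans (add_le_add (huC s) (hgC s))) h_diff t
  change u t ≤ g t
  linarith
end

section
/- lim_{R→∞} (1/R²) ∫₀^R ∫₀^R I₀(2√(xy)) e^{-x-y} dy dx = 0, where I₀ is the modified Bessel function of order zero. -/
/-!
Since `I₀(z) = ∑ ((z/2)^k/k!)² ≤ (∑ (z/2)^k/k!)² = e^z` for `z ≥ 0`, the integrand is at most
`e^{-(√x - √y)²}`, and for `x, y ∈ [0, R]` this is at most the Gaussian `e^{-(y-x)²/(4R)}`.
Each inner integral is then at most `2√(πR)`, so the double integral is `O(R^{3/2}) = o(R²)`.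
-/

open MeasureTheory Real Filter

/-- The modified Bessel function of the first kind of order zero. -/
noncomputable def besselI0 (z : ℝ) : ℝ :=
  ∑' k : ℕ, (z / 2) ^ (2 * k) / ((Nat.factorial k : ℝ)) ^ 2

theorem tsum_sq_le_sq_tsum {ι : Type*} {f : ι → ℝ} (hf : ∀ i, 0 ≤ f i) (hs : Summable f) :
    ∑' i, f i ^ 2 ≤ (∑' i, f i) ^ 2 := by
  have hle : ∀ i, f i ^ 2 ≤ f i * ∑' j, f j := fun i ↦ by
    rw [sq]; exact mul_le_mul_of_nonneg_left (hs.le_tsum i fun j _ ↦ hf j) (hf i)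
  have hs' : Summable (fun i ↦ f i * ∑' j, f j) := hs.mul_right _
  calc ∑' i, f i ^ 2 ≤ ∑' i, f i * ∑' j, f j :=
        (hs'.of_nonneg_of_le (fun i ↦ sq_nonneg _) hle).tsum_le_tsum hle hs'
    _ = (∑' i, f i) ^ 2 := by rw [hs.tsum_mul_right, sq]

theorem besselI0_eq_tsum_sq (z : ℝ) :
    besselI0 z = ∑' k : ℕ, ((|z| / 2) ^ k / k.factorial) ^ 2 := by
  unfold besselI0
  congr 1 with k
  rw [pow_mul, ← sq_abs, ← pow_mul, mul_comm, pow_mul, div_pow _ (k.factorial : ℝ), abs_div,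
    abs_two]

theorem besselI0_nonneg (z : ℝ) : 0 ≤ besselI0 z := by
  rw [besselI0_eq_tsum_sq]; exact tsum_nonneg fun k ↦ sq_nonneg _

theorem besselI0_le_exp_abs (z : ℝ) : besselI0 z ≤ exp |z| := by
  have hexp := NormedSpace.expSeries_div_hasSum_exp (|z| / 2)
  rw [← Real.exp_eq_exp_ℝ] at hexp
  calc besselI0 z = ∑' k : ℕ, ((|z| / 2) ^ k / k.factorial) ^ 2 := besselI0_eq_tsum_sq z
    _ ≤ exp (|z| / 2) ^ 2 := by
      rw [← hexp.tsum_eq]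
      exact tsum_sq_le_sq_tsum (fun k ↦ by positivity) hexp.summable
    _ = exp |z| := by rw [← exp_nat_mul]; ring_nf

theorem sq_sub_le_four_mul_mul_sq_sqrt_sub {x y R : ℝ} (hx : 0 ≤ x) (hxR : x ≤ R) (hy : 0 ≤ y)
    (hyR : y ≤ R) :
    (y - x) ^ 2 ≤ 4 * R * (√x - √y) ^ 2 := by
  have hsum : (√x + √y) ^ 2 ≤ 4 * R := by
    nlinarith [sq_sqrt hx, sq_sqrt hy, sqrt_nonneg x, sqrt_nonneg y, sq_nonneg (√x - √y)]
  calc (y - x) ^ 2 = (√x + √y) ^ 2 * (√x - √y) ^ 2 := by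
        linear_combination (y - x + √y ^ 2 - √x ^ 2) * (sq_sqrt hx - sq_sqrt hy)
    _ ≤ 4 * R * (√x - √y) ^ 2 := by gcongr

theorem besselI0_mul_exp_le {x y R : ℝ} (hR : 0 < R) (hx : 0 ≤ x) (hxR : x ≤ R) (hy : 0 ≤ y)
    (hyR : y ≤ R) :
    besselI0 (2 * √(x * y)) * exp (-x - y) ≤ exp (-(y - x) ^ 2 / (4 * R)) := by
  calc besselI0 (2 * √(x * y)) * exp (-x - y) ≤ exp (2 * √(x * y)) * exp (-x - y) := by
        gcongr
        simpa [abs_of_nonneg (sqrt_nonneg (x * y))] using besselI0_le_exp_abs (2 * √(x * y))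
    _ = exp (-(√x - √y) ^ 2) := by
        rw [← exp_add, sqrt_mul hx]
        congr 1
        linear_combination sq_sqrt hx + sq_sqrt hy
    _ ≤ exp (-(y - x) ^ 2 / (4 * R)) := by
        gcongr
        rw [neg_div, neg_le_neg_iff, div_le_iff₀ (by positivity), mul_comm]
        exact sq_sub_le_four_mul_mul_sq_sqrt_sub hx hxR hy hyR

/-- For `c ≤ 0` both sides are junk `0`: the integrand is not integrable and `√` of a
nonpositive number is `0`. -/
theorem integral_exp_neg_sq_sub_div (x c : ℝ) :
    ∫ y, exp (-(y - x) ^ 2 / c) = √(π * c) := by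
  rw [integral_sub_right_eq_self (fun t ↦ exp (-t ^ 2 / c)) x]
  simpa [neg_div, div_eq_inv_mul, div_inv_eq_mul, mul_comm π] using integral_gaussian c⁻¹

theorem intervalIntegral_besselI0_mul_exp_le {x R : ℝ} (hR : 0 < R) (hx : 0 ≤ x) (hxR : x ≤ R) :
    ∫ y in (0 : ℝ)..R, besselI0 (2 * √(x * y)) * exp (-x - y) ≤ 2 * √(π * R) := by
  have hgauss : Integrable (fun y ↦ exp (-(y - x) ^ 2 / (4 * R))) := by
    simpa [neg_div, div_eq_inv_mul] using
      (integrable_exp_neg_mul_sq (inv_pos.2 (by positivity : 0 < 4 * R))).comp_sub_right x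
  rw [intervalIntegral.integral_of_le hR.le]
  calc ∫ y in Set.Ioc 0 R, besselI0 (2 * √(x * y)) * exp (-x - y)
      ≤ ∫ y in Set.Ioc 0 R, exp (-(y - x) ^ 2 / (4 * R)) := by
        refine integral_mono_of_nonneg (.of_forall fun y ↦ ?_) hgauss.integrableOn ?_
        · exact mul_nonneg (besselI0_nonneg _) (exp_pos _).le
        · exact ae_restrict_of_forall_mem measurableSet_Ioc fun y hy ↦
            besselI0_mul_exp_le hR hx hxR hy.1.le hy.2
    _ ≤ ∫ y, exp (-(y - x) ^ 2 / (4 * R)) :=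
        setIntegral_le_integral hgauss (.of_forall fun _ ↦ (exp_pos _).le)
    _ = 2 * √(π * R) := by
        rw [integral_exp_neg_sq_sub_div, mul_left_comm, show (4 : ℝ) = 2 ^ 2 by norm_num,
          sqrt_mul (by positivity), sqrt_sq zero_le_two]

theorem stmt_11 :
    Filter.Tendsto
      (fun R : ℝ => (1 / R ^ 2) * ∫ x in (0:ℝ)..R, ∫ y in (0:ℝ)..R,
        besselI0 (2 * Real.sqrt (x * y)) * Real.exp (-x - y))
      Filter.atTop (nhds 0) := by
  have hdecay : Tendsto (fun R : ℝ ↦ 2 * √π / √R) atTop (nhds 0) :=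
    tendsto_const_nhds.div_atTop tendsto_sqrt_atTop
  refine squeeze_zero_norm' ?_ hdecay
  filter_upwards [eventually_gt_atTop 0] with R hR
  have hinner : ∀ x ∈ Set.uIoc 0 R,
      ‖∫ y in (0 : ℝ)..R, besselI0 (2 * √(x * y)) * exp (-x - y)‖ ≤ 2 * √(π * R) := by
    intro x hx
    rw [Set.uIoc_of_le hR.le] at hx
    rw [norm_of_nonneg (intervalIntegral.integral_nonneg hR.le fun y _ ↦
      mul_nonneg (besselI0_nonneg _) (exp_pos _).le)]
    exact intervalIntegral_besselI0_mul_exp_le hR hx.1.le hx.2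
  calc ‖1 / R ^ 2 * ∫ x in (0:ℝ)..R, ∫ y in (0:ℝ)..R, besselI0 (2 * √(x * y)) * exp (-x - y)‖
      ≤ 1 / R ^ 2 * (2 * √(π * R) * |R - 0|) := by
        rw [norm_mul, norm_of_nonneg (by positivity)]
        gcongr
        exact intervalIntegral.norm_integral_le_of_norm_le_const hinner
    _ = 2 * √π / √R := by
        rw [sub_zero, abs_of_pos hR, sqrt_mul pi_pos.le]
        field_simp
        exact sq_sqrt hR.le
end
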